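/- Let X₁, X₂, … be i.i.d. random variables with values in [A, B] (A < B) and mean μ, and let X̄ₖ = (1/k)∑_{i=1}^k Xᵢ. Then for every n ∈ ℕ and every x > 0, P(sup_{k ≥ n} |X̄ₖ - μ| > x) ≤ 2 exp(-2 n x² / (B - A)²). -/

import Mathlib

/-!
For `t > 0` and centred summands `Yᵢ = Xᵢ - μ`, Hoeffding's lemma says that `Yᵢ` is sub-Gaussian
with variance proxy `c = ((B - A) / 2)²`, i.e. `E[exp (t Yᵢ - c t² / 2)] ≤ 1`. Hence the products
`Mₖ = ∏_{i ≤ k} exp (t Yᵢ - c t² / 2)` of these independent factors form a nonnegative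
supermartingale for the natural filtration of the `Xᵢ`. On the event `k x < ∑_{i < k} Yᵢ` with
`k ≥ n`, the choice `t = x / c` gives `M_{k-1} ≥ exp (n x² / (2 c))`, and Ville's maximal inequality
for nonnegative supermartingales (optional stopping at the first hitting time) bounds the
probability of the whole event `∃ k ≥ n` by `exp (-n x² / (2 c)) = exp (-2 n x² / (B - A)²)`.
Applying this to `Yᵢ` and `-Yᵢ` gives the two-sided bound.
-/

open MeasureTheory ProbabilityTheory Filter Topology Real
open scoped NNReal

namespace MeasureTheory

variable {Ω : Type*} {m0 : MeasurableSpace Ω} {μ : Measure Ω} [IsFiniteMeasure μ]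
  {𝒢 : Filtration ℕ m0} {f : ℕ → Ω → ℝ}

theorem Supermartingale.mul_measureReal_exists_mem_Icc_ge_le_integral
    (hf : Supermartingale f 𝒢 μ) (hnonneg : 0 ≤ f) (ε : ℝ) {n N : ℕ} (hnN : n ≤ N) :
    ε * μ.real {ω | ∃ k ∈ Set.Icc n N, ε ≤ f k ω} ≤ μ[f n] := by
  set E := {ω | ∃ k ∈ Set.Icc n N, ε ≤ f k ω}
  set τ : Ω → WithTop ℕ := fun ω ↦ (hittingBtwn f (Set.Ici ε) n N ω : ℕ)
  have hτ : IsStoppingTime 𝒢 τ :=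
    hf.stronglyAdapted.adapted.isStoppingTime_hittingBtwn measurableSet_Ici
  have hτN (ω : Ω) : τ ω ≤ N := WithTop.coe_le_coe.2 (hittingBtwn_le ω)
  have hE : MeasurableSet E := by
    have : E = ⋃ k ∈ Set.Icc n N, {ω | ε ≤ f k ω} := by ext; simp [E]
    rw [this]
    exact MeasurableSet.biUnion (Set.to_countable _) fun k _ ↦
      measurableSet_le measurable_const ((hf.stronglyMeasurable k).measurable.le (𝒢.le k))
  have hstop : μ[stoppedValue f τ] ≤ μ[f n] := by
    have := hf.neg.expected_stoppedValue_mono (isStoppingTime_const 𝒢 n) hτ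
      (fun ω ↦ WithTop.coe_le_coe.2 (le_hittingBtwn hnN ω)) hτN
    simpa only [stoppedValue_neg, stoppedValue_const, Pi.neg_apply, integral_neg,
      neg_le_neg_iff] using this
  calc ε * μ.real E = ∫ ω, E.indicator (fun _ ↦ ε) ω ∂μ := by
        rw [integral_indicator_const _ hE, smul_eq_mul, mul_comm]
    _ ≤ μ[stoppedValue f τ] := by
        refine integral_mono ((integrable_const ε).indicator hE)
          (integrable_stoppedValue ℕ hτ hf.integrable hτN) fun ω ↦ ?_
        by_cases hω : ω ∈ E
        · rw [Set.indicator_of_mem hω]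
          exact stoppedValue_hittingBtwn_mem hω
        · rw [Set.indicator_of_notMem hω]
          exact hnonneg _ ω
    _ ≤ μ[f n] := hstop

theorem Supermartingale.mul_measureReal_exists_ge_le_integral
    (hf : Supermartingale f 𝒢 μ) (hnonneg : 0 ≤ f) (ε : ℝ) (n : ℕ) :
    ε * μ.real {ω | ∃ k, n ≤ k ∧ ε ≤ f k ω} ≤ μ[f n] := by
  set E : ℕ → Set Ω := fun m ↦ {ω | ∃ k ∈ Set.Icc n (n + m), ε ≤ f k ω}
  have hmono : Monotone E := fun m m' hm ω ⟨k, hk, hkε⟩ ↦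
    ⟨k, ⟨hk.1, hk.2.trans (by omega)⟩, hkε⟩
  have hunion : {ω | ∃ k, n ≤ k ∧ ε ≤ f k ω} = ⋃ m, E m := by
    ext ω
    simp only [E, Set.mem_ofPred_eq, Set.mem_iUnion, Set.mem_Icc]
    exact ⟨fun ⟨k, hk, hkε⟩ ↦ ⟨k - n, k, ⟨hk, by omega⟩, hkε⟩,
      fun ⟨_, k, hk, hkε⟩ ↦ ⟨k, hk.1, hkε⟩⟩
  have hlim : Tendsto (fun m ↦ ε * μ.real (E m)) atTop (𝓝 (ε * μ.real (⋃ m, E m))) :=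
    ((ENNReal.tendsto_toReal (measure_ne_top _ _)).comp
      (tendsto_measure_iUnion_atTop hmono)).const_mul ε
  rw [hunion]
  exact le_of_tendsto' hlim fun m ↦
    hf.mul_measureReal_exists_mem_Icc_ge_le_integral hnonneg ε (Nat.le_add_right n m)

end MeasureTheory

namespace ProbabilityTheory

variable {Ω : Type*} {mΩ : MeasurableSpace Ω} {μ : Measure Ω} {Z : ℕ → Ω → ℝ}

theorem iIndepFun.indepFun_of_stronglyMeasurable_natural (hZ : ∀ i, Measurable (Z i))
    (hind : iIndepFun Z μ) {k j : ℕ} (hkj : k < j) {g : Ω → ℝ}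
    (hg : StronglyMeasurable[Filtration.natural Z (fun i ↦ (hZ i).stronglyMeasurable) k] g) :
    IndepFun g (Z j) μ := by
  have hnat := indep_iSup_of_disjoint (fun i ↦ (hZ i).comap_le) hind.iIndep
    (S := Set.Iic k) (T := {j}) (Set.disjoint_singleton_right.2 (not_le.2 hkj))
  rw [iSup_singleton] at hnat
  rw [IndepFun_iff_Indep]
  exact indep_of_indep_of_le_left hnat hg.measurable.comap_le

theorem iIndepFun.supermartingale_prod_range_succ [IsFiniteMeasure μ] (hZ : ∀ i, Measurable (Z i))
    (hind : iIndepFun Z μ) (hnonneg : ∀ i, 0 ≤ Z i) (hint : ∀ i, Integrable (Z i) μ)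
    (hle : ∀ i, μ[Z i] ≤ 1) :
    Supermartingale (fun k ω ↦ ∏ i ∈ Finset.range (k + 1), Z i ω)
      (Filtration.natural Z fun i ↦ (hZ i).stronglyMeasurable) μ := by
  set 𝓕 := Filtration.natural Z fun i ↦ (hZ i).stronglyMeasurable
  set M : ℕ → Ω → ℝ := fun k ω ↦ ∏ i ∈ Finset.range (k + 1), Z i ω
  have hM_succ (k : ℕ) : M (k + 1) = M k * Z (k + 1) := by
    ext ω
    exact Finset.prod_range_succ _ _
  have hadapted : StronglyAdapted 𝓕 M := fun k ↦
    Finset.stronglyMeasurable_fun_prod _ fun i hi ↦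
      (Filtration.stronglyAdapted_natural _ i).mono (𝓕.mono (Finset.mem_range_succ_iff.1 hi))
  have hMint (k : ℕ) : Integrable (M k) μ := by
    induction k with
    | zero => simpa [M] using hint 0
    | succ k ih =>
      rw [hM_succ]
      exact (hind.indepFun_of_stronglyMeasurable_natural hZ k.lt_succ_self
        (hadapted k)).integrable_mul ih (hint _)
  refine supermartingale_of_setIntegral_succ_le hadapted hMint fun k s hs ↦ ?_
  have hs' : MeasurableSet s := 𝓕.le k s hs
  have hindep : IndepFun (s.indicator (M k)) (Z (k + 1)) μ :=
    hind.indepFun_of_stronglyMeasurable_natural hZ k.lt_succ_self ((hadapted k).indicator hs)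
  calc ∫ ω in s, M (k + 1) ω ∂μ = ∫ ω, s.indicator (M k) ω * Z (k + 1) ω ∂μ := by
        rw [← integral_indicator hs', hM_succ]
        congr 1 with ω
        exact Set.indicator_mul_left s (M k) (Z (k + 1))
    _ = (∫ ω in s, M k ω ∂μ) * μ[Z (k + 1)] := by
        rw [hindep.integral_fun_mul_eq_mul_integral ((hMint k).indicator hs').aestronglyMeasurable
          (hZ _).aestronglyMeasurable, integral_indicator hs']
    _ ≤ ∫ ω in s, M k ω ∂μ :=
        mul_le_of_le_one_right (setIntegral_nonneg hs' fun ω _ ↦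
          Finset.prod_nonneg fun i _ ↦ hnonneg i ω) (hle _)

theorem HasSubgaussianMGF.integral_exp_mul_sub_le_one {X : Ω → ℝ} {c : ℝ≥0}
    (h : HasSubgaussianMGF X c μ) (t : ℝ) :
    μ[fun ω ↦ exp (t * X ω - c * t ^ 2 / 2)] ≤ 1 := by
  simp_rw [exp_sub, integral_div]
  exact div_le_one_of_le₀ (h.mgf_le t) (exp_pos _).le

theorem measureReal_exists_mul_lt_sum_range_le_of_iIndepFun [IsProbabilityMeasure μ]
    {Y : ℕ → Ω → ℝ} (hY : ∀ i, Measurable (Y i)) (hind : iIndepFun Y μ) {c : ℝ≥0} (hc : 0 < c)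
    (hsubG : ∀ i, HasSubgaussianMGF (Y i) c μ) {x : ℝ} (hx : 0 < x) (n : ℕ) :
    μ.real {ω | ∃ k, n ≤ k ∧ k * x < ∑ i ∈ Finset.range k, Y i ω} ≤
      exp (-n * x ^ 2 / (2 * c)) := by
  set t : ℝ := x / c
  set Z : ℕ → Ω → ℝ := fun i ω ↦ exp (t * Y i ω - c * t ^ 2 / 2)
  have hZ (i : ℕ) : Measurable (Z i) := by fun_prop
  have hZind : iIndepFun Z μ :=
    hind.comp (fun _ y ↦ exp (t * y - c * t ^ 2 / 2)) fun _ ↦ by fun_prop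
  have hZint (i : ℕ) : Integrable (Z i) μ := by
    simpa only [Z, exp_sub] using ((hsubG i).integrable_exp_mul t).div_const _
  have hM := hZind.supermartingale_prod_range_succ hZ (fun i ω ↦ (exp_pos _).le) hZint
    fun i ↦ (hsubG i).integral_exp_mul_sub_le_one t
  set ε := exp (n * (x ^ 2 / (2 * c)))
  have hsub : {ω | ∃ k, n ≤ k ∧ k * x < ∑ i ∈ Finset.range k, Y i ω} ⊆
      {ω | ∃ k, n - 1 ≤ k ∧ ε ≤ ∏ i ∈ Finset.range (k + 1), Z i ω} := by
    rintro ω ⟨k, hnk, hk⟩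
    have hk0 : k ≠ 0 := by rintro rfl; simp at hk
    refine ⟨k - 1, by omega, ?_⟩
    have ht : 0 < t := div_pos hx (mod_cast hc)
    have hdrift : t * (k * x) - k * (c * t ^ 2 / 2) = k * (x ^ 2 / (2 * c)) := by
      simp only [t]; field_simp; ring
    rw [Nat.sub_add_cancel (Nat.one_le_iff_ne_zero.2 hk0), ← exp_sum, exp_le_exp,
      Finset.sum_sub_distrib, ← Finset.mul_sum, Finset.sum_const, Finset.card_range, nsmul_eq_mul]
    calc (n : ℝ) * (x ^ 2 / (2 * c)) ≤ k * (x ^ 2 / (2 * c)) := by gcongr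
      _ = t * (k * x) - k * (c * t ^ 2 / 2) := hdrift.symm
      _ ≤ _ := by gcongr
  have hEM : μ[fun ω ↦ ∏ i ∈ Finset.range (n - 1 + 1), Z i ω] ≤ 1 := by
    have := hM.setIntegral_le (Nat.zero_le (n - 1)) MeasurableSet.univ
    simp only [setIntegral_univ, zero_add, Finset.prod_range_one] at this
    exact this.trans ((hsubG 0).integral_exp_mul_sub_le_one t)
  have hville := hM.mul_measureReal_exists_ge_le_integral
    (fun k ω ↦ Finset.prod_nonneg fun i _ ↦ (exp_pos _).le) ε (n - 1)
  calc μ.real _ ≤ μ.real _ := measureReal_mono hsub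
    _ ≤ 1 / ε := (le_div_iff₀' (exp_pos _)).2 (hville.trans hEM)
    _ = exp (-n * x ^ 2 / (2 * c)) := by rw [one_div, ← exp_neg]; congr 1; ring

end ProbabilityTheory

theorem lt_abs_average_sub_iff {k : ℕ} (hk : k ≠ 0) (a : ℕ → ℝ) (m x : ℝ) :
    x < |(1 / (k : ℝ)) * ∑ i ∈ Finset.range k, a i - m| ↔
      k * x < |∑ i ∈ Finset.range k, (a i - m)| := by
  have hk' : (0 : ℝ) < k := Nat.cast_pos.2 (Nat.pos_of_ne_zero hk)
  have : ∑ i ∈ Finset.range k, (a i - m) =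
      k * ((1 / (k : ℝ)) * ∑ i ∈ Finset.range k, a i - m) := by
    rw [Finset.sum_sub_distrib, Finset.sum_const, Finset.card_range, nsmul_eq_mul]
    field_simp
  rw [this, abs_mul, abs_of_pos hk', mul_lt_mul_iff_right₀ hk']

/-- Supremal extension of Hoeffding's inequality:
`P(sup_{k ≥ n} |X̄_k - μ| > x) ≤ 2 exp(-2 n x² / (B - A)²)`. -/
theorem stmt_6 {Ω : Type*} [MeasurableSpace Ω] (P : Measure Ω) [IsProbabilityMeasure P]
    (X : ℕ → Ω → ℝ) (hmeas : ∀ i, Measurable (X i))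
    (hindep : iIndepFun X P)
    (hident : ∀ i, Measure.map (X i) P = Measure.map (X 0) P)
    (A B : ℝ) (hAB : A < B) (hbdd : ∀ i, ∀ᵐ ω ∂P, X i ω ∈ Set.Icc A B)
    (μ : ℝ) (hμ : μ = ∫ ω, X 0 ω ∂P)
    (Xbar : ℕ → Ω → ℝ)
    (hXbar : ∀ k ω, Xbar k ω = (1 / (k : ℝ)) * ∑ i ∈ Finset.range k, X i ω)
    (n : ℕ) (hn : 1 ≤ n) (x : ℝ) (hx : 0 < x) :
    (P {ω | ∃ k, n ≤ k ∧ x < |Xbar k ω - μ|}).toReal ≤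
      2 * Real.exp (-2 * (n : ℝ) * x ^ 2 / (B - A) ^ 2) := by
  have hmean (i : ℕ) : P[X i] = μ :=
    hμ ▸ (⟨(hmeas i).aemeasurable, (hmeas 0).aemeasurable, hident i⟩ :
      IdentDistrib (X i) (X 0) P P).integral_eq
  set c : ℝ≥0 := (‖B - A‖₊ / 2) ^ 2
  have hc : 0 < c := by
    have : 0 < ‖B - A‖₊ := nnnorm_pos.2 (sub_ne_zero.2 hAB.ne')
    positivity
  have hexponent : -n * x ^ 2 / (2 * c) = -2 * (n : ℝ) * x ^ 2 / (B - A) ^ 2 := by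
    simp only [c, NNReal.coe_pow, NNReal.coe_div, NNReal.coe_ofNat, coe_nnnorm, Real.norm_eq_abs,
      abs_of_pos (sub_pos.2 hAB)]
    field_simp
  have hsubG (i : ℕ) : HasSubgaussianMGF (fun ω ↦ X i ω - μ) c P := by
    simpa only [hmean i] using hasSubgaussianMGF_of_mem_Icc (hmeas i).aemeasurable (hbdd i)
  have hup := measureReal_exists_mul_lt_sum_range_le_of_iIndepFun (fun i ↦ (hmeas i).sub_const μ)
    (hindep.comp (fun _ y ↦ y - μ) fun _ ↦ by fun_prop) hc hsubG hx n
  have hdown := measureReal_exists_mul_lt_sum_range_le_of_iIndepFun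
    (fun i ↦ ((hmeas i).sub_const μ).neg) (hindep.comp (fun _ y ↦ -(y - μ)) fun _ ↦ by fun_prop)
    hc (fun i ↦ (hsubG i).neg) hx n
  rw [hexponent] at hup hdown
  have hsub : {ω | ∃ k, n ≤ k ∧ x < |Xbar k ω - μ|} ⊆
      {ω | ∃ k, n ≤ k ∧ k * x < ∑ i ∈ Finset.range k, (X i ω - μ)} ∪
      {ω | ∃ k, n ≤ k ∧ k * x < ∑ i ∈ Finset.range k, -(X i ω - μ)} := by
    rintro ω ⟨k, hnk, hk⟩
    rw [hXbar, lt_abs_average_sub_iff (by omega), lt_abs, ← Finset.sum_neg_distrib] at hk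
    exact hk.imp (fun h ↦ ⟨k, hnk, h⟩) fun h ↦ ⟨k, hnk, h⟩
  calc (P _).toReal ≤ P.real _ := measureReal_mono hsub
    _ ≤ _ := measureReal_union_le _ _
    _ ≤ _ := by simp only [Pi.neg_apply] at hdown; linarith
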